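/- If φ ∈ Φ_ex with γ := γ_φ > 1, then for all x ≥ 0, φ(x) ≤ γ·(γ^x − 1)/(γ − 1)·φ(1), i.e. functions in Φ_ex are dominated by exponentials. -/

import Mathlib

open Set Filter

/-- `Φ`: convex, strictly increasing bijections of `[0,∞)` (with `φ 0 = 0`). -/
def Phi (φ : ℝ → ℝ) : Prop :=
  ConvexOn ℝ (Ici 0) φ ∧ StrictMonoOn φ (Ici 0) ∧
    Set.BijOn φ (Ici 0) (Ici 0) ∧ φ 0 = 0

/-- `γ_φ = sup_{x ≥ 0} φ(1+x)/(φ(1)+φ(x))`, valued in `[0,∞]`. -/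
noncomputable def gam (φ : ℝ → ℝ) : ENNReal :=
  ⨆ x : Ici (0:ℝ), ENNReal.ofReal (φ (1 + x) / (φ 1 + φ x))

/-!
Write `B x = γ (γ^x - 1)/(γ - 1)`. On `[0,1]`, convexity and `φ 0 = 0` give `φ x ≤ x φ(1)`,
and `x ≤ B x` since `γ^x ≥ 1 + x log γ` and `γ log γ ≥ γ - 1`. The definition of `γ_φ` gives
`φ(x+1) ≤ γ (φ(1) + φ(x))`, and `B` satisfies `γ (1 + B x) = B (x + 1)`, so the bound
`φ x ≤ B x φ(1)` propagates from `[0,1]` to all `x ≥ 0` by induction on `⌊x⌋`.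
-/

theorem Real.forall_nonneg_of_forall_Icc_of_add_one {P : ℝ → Prop}
    (base : ∀ x ∈ Icc (0 : ℝ) 1, P x) (step : ∀ x, 0 ≤ x → P x → P (x + 1)) :
    ∀ x, 0 ≤ x → P x := by
  have shifted : ∀ n : ℕ, ∀ y ∈ Icc (0 : ℝ) 1, P (y + n) := by
    intro n
    induction n with
    | zero => simpa using base
    | succ n ih =>
      intro y hy
      rw [Nat.cast_succ, ← add_assoc]
      exact step _ (by linarith [hy.1, n.cast_nonneg (α := ℝ)]) (ih y hy)
  intro x hx
  have hfloor : (⌊x⌋₊ : ℝ) ≤ x := Nat.floor_le hx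
  have hfloor' : x < ⌊x⌋₊ + 1 := Nat.lt_floor_add_one x
  simpa using shifted ⌊x⌋₊ (x - ⌊x⌋₊) ⟨by linarith, by linarith⟩

theorem Real.mul_sub_one_le_mul_rpow_sub_one {γ x : ℝ} (hγ : 0 < γ) (hx : 0 ≤ x) :
    x * (γ - 1) ≤ γ * (γ ^ x - 1) := by
  have hlog : γ - 1 ≤ γ * Real.log γ := by
    have h := Real.one_sub_inv_le_log_of_pos hγ
    have h' := mul_le_mul_of_nonneg_left h hγ.le
    rwa [mul_sub, mul_one, mul_inv_cancel₀ hγ.ne'] at h'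
  have hexp : 1 + x * Real.log γ ≤ γ ^ x := by
    rw [Real.rpow_def_of_pos hγ, mul_comm]
    linarith [Real.add_one_le_exp (Real.log γ * x)]
  nlinarith [mul_le_mul_of_nonneg_left hlog hx]

namespace Phi

variable {φ : ℝ → ℝ}

theorem apply_nonneg (hφ : Phi φ) {x : ℝ} (hx : 0 ≤ x) : 0 ≤ φ x :=
  hφ.2.2.1.mapsTo hx

theorem apply_one_pos (hφ : Phi φ) : 0 < φ 1 := by
  simpa [hφ.2.2.2] using hφ.2.1 (mem_Ici.2 le_rfl) (mem_Ici.2 zero_le_one) zero_lt_one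

theorem apply_le_mul_apply_one (hφ : Phi φ) {x : ℝ} (hx : x ∈ Icc (0 : ℝ) 1) :
    φ x ≤ x * φ 1 := by
  have h := hφ.1.2 (mem_Ici.2 le_rfl) (mem_Ici.2 zero_le_one)
    (sub_nonneg.2 hx.2) hx.1 (sub_add_cancel 1 x)
  simpa [hφ.2.2.2] using h

theorem apply_add_one_le_of_gam_le (hφ : Phi φ) {γ : ℝ} (hγ : gam φ ≤ ENNReal.ofReal γ)
    (hγ0 : 0 ≤ γ) {x : ℝ} (hx : 0 ≤ x) : φ (x + 1) ≤ γ * (φ 1 + φ x) := by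
  have hsum : 0 < φ 1 + φ x := add_pos_of_pos_of_nonneg hφ.apply_one_pos (hφ.apply_nonneg hx)
  have hsup : ENNReal.ofReal (φ (1 + x) / (φ 1 + φ x)) ≤ ENNReal.ofReal γ :=
    (le_iSup (fun y : Ici (0 : ℝ) => ENNReal.ofReal (φ (1 + y) / (φ 1 + φ y))) ⟨x, hx⟩).trans hγ
  rw [ENNReal.ofReal_le_ofReal_iff hγ0, div_le_iff₀ hsum, add_comm] at hsup
  exact hsup

end Phi

/-- If `φ ∈ Φ_ex` with `γ = γ_φ > 1`, then `φ(x) ≤ γ (γ^x − 1)/(γ − 1) · φ(1)`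
for all `x ≥ 0`. -/
theorem stmt_10 (φ : ℝ → ℝ) (hφ : Phi φ) (γ : ℝ)
    (hγ : gam φ = ENNReal.ofReal γ) (hγ1 : 1 < γ) :
    ∀ x : ℝ, 0 ≤ x → φ x ≤ γ * (γ ^ x - 1) / (γ - 1) * φ 1 := by
  have hγ0 : 0 < γ := zero_lt_one.trans hγ1
  have hγ1' : 0 < γ - 1 := sub_pos.2 hγ1
  apply Real.forall_nonneg_of_forall_Icc_of_add_one
  · intro x hx
    have hxB : x ≤ γ * (γ ^ x - 1) / (γ - 1) := by
      rw [le_div_iff₀ hγ1']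
      exact Real.mul_sub_one_le_mul_rpow_sub_one hγ0 hx.1
    calc φ x ≤ x * φ 1 := hφ.apply_le_mul_apply_one hx
      _ ≤ _ := mul_le_mul_of_nonneg_right hxB hφ.apply_one_pos.le
  · intro x hx ih
    have hrec : γ * (φ 1 + γ * (γ ^ x - 1) / (γ - 1) * φ 1) =
        γ * (γ ^ (x + 1) - 1) / (γ - 1) * φ 1 := by
      rw [Real.rpow_add_one hγ0.ne']
      field_simp
      ring
    calc φ (x + 1) ≤ γ * (φ 1 + φ x) := hφ.apply_add_one_le_of_gam_le hγ.le hγ0.le hx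
      _ ≤ γ * (φ 1 + γ * (γ ^ x - 1) / (γ - 1) * φ 1) := by gcongr
      _ = _ := hrec
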